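/- arXiv:2308.06709 — 2 statements merged into one kernel-verified Lean document; each statement's English description precedes it below -/
import Mathlib

section
/- Under the assumptions of the auxiliary-function construction theorem (Theorem 3.2 of the paper), the piecewise function φ : closure(Ω) → ℝ defined by φ(x) = c³ if x ∈ (closure(Ω⁻) \ U) ∪ (closure(Ω⁻) ∩ L_c); φ(x) = c³ − (c − ψ(x))³ if x ∈ (U ∩ closure(Ω⁻)) \ L_c; φ(x) = 0 if x ∈ closure(Ω⁺), is well-defined (the piecewise definitions agree on all overlap closures) and continuous on closure(Ω). -/
/-!
By continuity `ψ ≤ c` on `closure D₂`, while `c ≤ ψ` on `closure D₁ ∩ closure U`: the part of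
`D₁` outside `U` only reaches `closure U` on the frontier of `U`, where `ψ > ∏ cᵢ > c`. This
settles the overlaps, since `ψ = 0 < c` on `Γ ⊆ U`. It also shows that on
`closure Ω⁻ ∩ closure U` the function `φ` is the continuous function `c³ − (max (c − ψ) 0)³`;
pasting it with the constants `c³` on `closure Ω⁻ \ U` and `0` on `closure Ω⁺` gives continuity.
-/

open Set

section Pieces

variable {X : Type*} [TopologicalSpace X] {S U : Set X} {ψ : X → ℝ} {c : ℝ}

lemma mapsTo_closure_diff_superlevel (hψ : ContinuousOn ψ (closure U)) :
    MapsTo ψ (closure ((U ∩ S) \ {x ∈ U | c ≤ ψ x})) (Iic c) := by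
  have hmaps : MapsTo ψ ((U ∩ S) \ {x ∈ U | c ≤ ψ x}) (Iic c) :=
    fun x hx => le_of_not_ge fun h => hx.2 ⟨hx.1.1, h⟩
  simpa only [closure_Iic] using
    hmaps.closure_of_continuousOn (hψ.mono (closure_mono fun x hx => hx.1.1))

lemma mapsTo_closure_superlevel_inter_closure (hS : IsClosed S) (hU : IsOpen U)
    (hψ : ContinuousOn ψ (closure U)) (hfr : ∀ x ∈ frontier U ∩ S, c < ψ x) :
    MapsTo ψ (closure ((S \ U) ∪ (S ∩ {x ∈ U | c ≤ ψ x})) ∩ closure U) (Ici c) := by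
  rintro x ⟨hx, hxU⟩
  rw [closure_union] at hx
  rcases hx with hx | hx
  · obtain ⟨hxS, hxnU⟩ : x ∈ S \ U := (hS.sdiff hU).closure_subset hx
    exact (hfr x ⟨hU.frontier_eq ▸ ⟨hxU, hxnU⟩, hxS⟩).le
  · have hmaps : MapsTo ψ (S ∩ {x ∈ U | c ≤ ψ x}) (Ici c) := fun y hy => hy.2.2
    simpa only [closure_Ici] using
      hmaps.closure_of_continuousOn (hψ.mono (closure_mono fun y hy => hy.2.1)) hx

lemma eqOn_sub_max_pow_of_pieces (hS : IsClosed S) (hU : IsOpen U)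
    (hψ : ContinuousOn ψ (closure U)) (hfr : ∀ x ∈ frontier U ∩ S, c < ψ x) {φ : X → ℝ}
    (hφ₁ : ∀ x ∈ (S \ U) ∪ (S ∩ {x ∈ U | c ≤ ψ x}), φ x = c ^ 3)
    (hφ₂ : ∀ x ∈ (U ∩ S) \ {x ∈ U | c ≤ ψ x}, φ x = c ^ 3 - (c - ψ x) ^ 3) :
    EqOn φ (fun x => c ^ 3 - max (c - ψ x) 0 ^ 3) (S ∩ closure U) := by
  rintro x ⟨hxS, hxU⟩
  by_cases hx₂ : x ∈ (U ∩ S) \ {x ∈ U | c ≤ ψ x}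
  · have hle : ψ x ≤ c := mapsTo_closure_diff_superlevel hψ (subset_closure hx₂)
    simp only [hφ₂ x hx₂, max_eq_left (sub_nonneg.2 hle)]
  · have hx₁ : x ∈ (S \ U) ∪ (S ∩ {x ∈ U | c ≤ ψ x}) := by
      by_cases hxU' : x ∈ U
      · exact Or.inr ⟨hxS, not_not.1 fun h => hx₂ ⟨⟨hxU', hxS⟩, h⟩⟩
      · exact Or.inl ⟨hxS, hxU'⟩
    have hge : c ≤ ψ x :=
      mapsTo_closure_superlevel_inter_closure hS hU hψ hfr ⟨subset_closure hx₁, hxU⟩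
    simp only [hφ₁ x hx₁, max_eq_right (sub_nonpos.2 hge)]
    ring

lemma continuousOn_of_pieces (hS : IsClosed S) (hU : IsOpen U)
    (hψ : ContinuousOn ψ (closure U)) (hfr : ∀ x ∈ frontier U ∩ S, c < ψ x) {φ : X → ℝ}
    (hφ₁ : ∀ x ∈ (S \ U) ∪ (S ∩ {x ∈ U | c ≤ ψ x}), φ x = c ^ 3)
    (hφ₂ : ∀ x ∈ (U ∩ S) \ {x ∈ U | c ≤ ψ x}, φ x = c ^ 3 - (c - ψ x) ^ 3) :
    ContinuousOn φ S := by
  have hout : ContinuousOn φ (S \ U) :=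
    continuousOn_const.congr fun x hx => hφ₁ x (Or.inl hx)
  have hin : ContinuousOn φ (S ∩ closure U) := by
    have hg : ContinuousOn (fun x => c ^ 3 - max (c - ψ x) 0 ^ 3) (S ∩ closure U) :=
      ContinuousOn.mono (by fun_prop) inter_subset_right
    exact hg.congr (eqOn_sub_max_pow_of_pieces hS hU hψ hfr hφ₁ hφ₂)
  refine (hout.union_of_isClosed hin (hS.sdiff hU) (hS.inter isClosed_closure)).mono ?_
  intro x hxS
  by_cases hxU : x ∈ U
  · exact Or.inr ⟨hxS, subset_closure hxU⟩
  · exact Or.inl ⟨hxS, hxU⟩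

end Pieces

theorem aux_function_well_defined_continuous_general {d n : ℕ}
    (Ω Ωm Ωp Γ U : Set (EuclideanSpace ℝ (Fin d)))
    (M : Fin n → Set (EuclideanSpace ℝ (Fin d)))
    (hΩ : Ω = Ωm ∪ Γ ∪ Ωp)
    (hΓ : Γ = closure Ωp ∩ closure Ωm)
    (hUopen : IsOpen U) (hΓU : Γ ⊆ U)
    (ψ' : Fin n → EuclideanSpace ℝ (Fin d) → ℝ)
    (hψ'cont : ∀ i, ContinuousOn (ψ' i) (closure U))
    (c' : Fin n → ℝ) (hc' : ∀ i, 0 < c' i)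
    (hψ0 : ∀ i, ∀ x ∈ M i ∩ Γ, ψ' i x = 0)
    (hΓM : ∀ x ∈ Γ, ∃ i, x ∈ M i)
    (hbig : ∀ i, ∀ x ∈ frontier U ∩ closure Ωm, c' i < ψ' i x)
    (c : ℝ) (hc0 : 0 < c) (hcprod : c < ∏ i, c' i)
    (ψ : EuclideanSpace ℝ (Fin d) → ℝ) (hψ : ψ = fun x => ∏ i, ψ' i x)
    (Lc : Set (EuclideanSpace ℝ (Fin d))) (hLc : Lc = {x ∈ U | c ≤ ψ x})
    (D₁ D₂ D₃ : Set (EuclideanSpace ℝ (Fin d)))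
    (hD₁ : D₁ = (closure Ωm \ U) ∪ (closure Ωm ∩ Lc))
    (hD₂ : D₂ = (U ∩ closure Ωm) \ Lc)
    (hD₃ : D₃ = closure Ωp)
    (φ : EuclideanSpace ℝ (Fin d) → ℝ)
    (hφ₁ : ∀ x ∈ D₁, φ x = c ^ 3)
    (hφ₂ : ∀ x ∈ D₂, φ x = c ^ 3 - (c - ψ x) ^ 3)
    (hφ₃ : ∀ x ∈ D₃, φ x = 0) :
    -- well-definedness: the piecewise formulas agree on all overlap closures
    (∀ x ∈ closure D₁ ∩ closure D₂, c ^ 3 = c ^ 3 - (c - ψ x) ^ 3) ∧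
    (∀ x ∈ closure D₂ ∩ closure D₃, c ^ 3 - (c - ψ x) ^ 3 = 0) ∧
    closure D₁ ∩ closure D₃ = ∅ ∧
    -- continuity on closure Ω
    ContinuousOn φ (closure Ω) := by
  subst hΩ hΓ hLc hD₁ hD₂ hD₃
  have hψcont : ContinuousOn ψ (closure U) :=
    hψ ▸ continuousOn_finsetProd _ fun i _ => hψ'cont i
  have hψΓ : ∀ x ∈ closure Ωp ∩ closure Ωm, ψ x = 0 := fun x hx => by
    obtain ⟨i, hi⟩ := hΓM x hx
    exact hψ ▸ Finset.prod_eq_zero (Finset.mem_univ i) (hψ0 i x ⟨hi, hx⟩)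
  have hfr : ∀ x ∈ frontier U ∩ closure Ωm, c < ψ x := fun x hx =>
    hψ ▸ hcprod.trans_le (Finset.prod_le_prod (fun i _ => (hc' i).le) fun i _ => (hbig i x hx).le)
  have hle := mapsTo_closure_diff_superlevel (S := closure Ωm) (c := c) hψcont
  have hge := mapsTo_closure_superlevel_inter_closure isClosed_closure hUopen hψcont hfr
  have hD₁Ωm : closure ((closure Ωm \ U) ∪ (closure Ωm ∩ {x ∈ U | c ≤ ψ x})) ⊆ closure Ωm :=
    closure_minimal (union_subset sdiff_subset inter_subset_left) isClosed_closure
  refine ⟨fun x ⟨h₁, h₂⟩ => ?_, fun x ⟨h₂, h₃⟩ => ?_, ?_, ?_⟩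
  · have hψx : ψ x = c := le_antisymm (hle h₂) (hge ⟨h₁, closure_mono (fun y hy => hy.1.1) h₂⟩)
    rw [hψx]
    ring
  · have hxΓ : x ∈ closure Ωp ∩ closure Ωm :=
      ⟨isClosed_closure.closure_subset h₃, closure_minimal (fun y hy => hy.1.2) isClosed_closure h₂⟩
    rw [hψΓ x hxΓ]
    ring
  · refine eq_empty_of_forall_notMem fun x ⟨h₁, h₃⟩ => ?_
    have hxΓ : x ∈ closure Ωp ∩ closure Ωm := ⟨isClosed_closure.closure_subset h₃, hD₁Ωm h₁⟩
    have : c ≤ ψ x := hge ⟨h₁, subset_closure (hΓU hxΓ)⟩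
    linarith [hψΓ x hxΓ]
  · refine ((continuousOn_of_pieces isClosed_closure hUopen hψcont hfr hφ₁ hφ₂).union_of_isClosed
      (continuousOn_const.congr hφ₃) isClosed_closure isClosed_closure).mono ?_
    refine closure_minimal (union_subset (union_subset ?_ ?_) ?_)
      (isClosed_closure.union isClosed_closure)
    · exact subset_closure.trans subset_union_left
    · exact inter_subset_left.trans subset_union_right
    · exact subset_closure.trans subset_union_right

/-- The auxiliary function `φ` of Theorem 3.2, defined piecewise by `c³` on
`D₁ = (closure Ω⁻ \ U) ∪ (closure Ω⁻ ∩ L_c)`, by `c³ − (c − ψ)³` on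
`D₂ = (U ∩ closure Ω⁻) \ L_c`, and by `0` on `D₃ = closure Ω⁺`, is well-defined
(the pieces agree on all overlap closures) and continuous on `closure Ω`. -/
theorem aux_function_well_defined_continuous {d n : ℕ}
    (Ω Ωm Ωp Γ U : Set (EuclideanSpace ℝ (Fin d)))
    (M : Fin n → Set (EuclideanSpace ℝ (Fin d)))
    (hΩmOpen : IsOpen Ωm) (hΩpOpen : IsOpen Ωp)
    (hdisj : Disjoint Ωm Ωp)
    (hΩ : Ω = Ωm ∪ Γ ∪ Ωp)
    (hΓ : Γ = closure Ωp ∩ closure Ωm)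
    (hUopen : IsOpen U) (hΓU : Γ ⊆ U)
    (ψ' : Fin n → EuclideanSpace ℝ (Fin d) → ℝ)
    (hψ'cont : ∀ i, ContinuousOn (ψ' i) (closure U))
    (c' : Fin n → ℝ) (hc' : ∀ i, 0 < c' i)
    (hψ0 : ∀ i, ∀ x ∈ M i ∩ Γ, ψ' i x = 0)
    (hψpos : ∀ i, ∀ x ∈ U ∩ Ωm, 0 < ψ' i x)
    (hΓM : ∀ x ∈ Γ, ∃ i, x ∈ M i)
    (hbig : ∀ i, ∀ x ∈ frontier U ∩ closure Ωm, c' i < ψ' i x)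
    (c : ℝ) (hc0 : 0 < c) (hcprod : c < ∏ i, c' i)
    (ψ : EuclideanSpace ℝ (Fin d) → ℝ) (hψ : ψ = fun x => ∏ i, ψ' i x)
    (Lc : Set (EuclideanSpace ℝ (Fin d))) (hLc : Lc = {x ∈ U | c ≤ ψ x})
    (D₁ D₂ D₃ : Set (EuclideanSpace ℝ (Fin d)))
    (hD₁ : D₁ = (closure Ωm \ U) ∪ (closure Ωm ∩ Lc))
    (hD₂ : D₂ = (U ∩ closure Ωm) \ Lc)
    (hD₃ : D₃ = closure Ωp)
    (φ : EuclideanSpace ℝ (Fin d) → ℝ)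
    (hφ₁ : ∀ x ∈ D₁, φ x = c ^ 3)
    (hφ₂ : ∀ x ∈ D₂, φ x = c ^ 3 - (c - ψ x) ^ 3)
    (hφ₃ : ∀ x ∈ D₃, φ x = 0) :
    -- well-definedness: the piecewise formulas agree on all overlap closures
    (∀ x ∈ closure D₁ ∩ closure D₂, c ^ 3 = c ^ 3 - (c - ψ x) ^ 3) ∧
    (∀ x ∈ closure D₂ ∩ closure D₃, c ^ 3 - (c - ψ x) ^ 3 = 0) ∧
    closure D₁ ∩ closure D₃ = ∅ ∧
    -- continuity on closure Ω
    ContinuousOn φ (closure Ω) :=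
  aux_function_well_defined_continuous_general Ω Ωm Ωp Γ U M hΩ hΓ hUopen hΓU ψ' hψ'cont c' hc' hψ0
    hΓM hbig c hc0 hcprod ψ hψ Lc hLc D₁ D₂ D₃ hD₁ hD₂ hD₃ φ hφ₁ hφ₂ hφ₃
end

section
/- Let x ∈ Γ be a point where ψᵢ(x) = 0 for at most one index i ∈ {1,…,n}, ψⱼ(x) > 0 for all other j, and ∂_n ψᵢ(x) ≠ 0. Then the jump [β ∂_n φ]_Γ(x) = −3β⁻ c² (∂_n ψᵢ)(x) ∏_{j≠i} ψⱼ(x) ≠ 0, where φ is the auxiliary function of Theorem 3.2. Consequently, [β ∂_n φ]_Γ ≠ 0 on the set of points of Γ lying in exactly one manifold Mᵢ. -/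
/-! Since `φ` vanishes on `Ω⁺` and equals `c³ - (c - ψ)³` on `Ω⁻`, the jump is `-β⁻ ∂ₙφ`,
and by the chain rule `∂ₙφ = 3(c - ψ)² ∂ₙψ = 3c² ∂ₙψ` on `Γ`. Where only `ψᵢ` vanishes, the product rule for
`ψ = ∏ⱼ ψⱼ` leaves the single term `∂ₙψᵢ ∏_{j≠i} ψⱼ`, which is nonzero. -/

open Finset

theorem HasFDerivAt.finsetProd_of_eq_zero {ι 𝕜 E 𝔸 : Type*} [DecidableEq ι]
    [NontriviallyNormedField 𝕜] [NormedAddCommGroup E] [NormedSpace 𝕜 E] [NormedCommRing 𝔸]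
    [NormedAlgebra 𝕜 𝔸] {u : Finset ι} {g : ι → E → 𝔸}
    {g' : ι → E →L[𝕜] 𝔸} {x : E} {i : ι} (hg : ∀ k ∈ u, HasFDerivAt (g k) (g' k) x)
    (hi : i ∈ u) (hzero : g i x = 0) :
    HasFDerivAt (∏ k ∈ u, g k ·) ((∏ j ∈ u.erase i, g j x) • g' i) x := by
  convert HasFDerivAt.finsetProd hg using 1
  refine (sum_eq_single_of_mem (f := fun k => (∏ j ∈ u.erase k, g j x) • g' k) i hi
    fun k _ hki => ?_).symm
  rw [prod_eq_zero (mem_erase.mpr ⟨Ne.symm hki, hi⟩) hzero]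
  exact zero_smul 𝔸 (g' k)

theorem hasDerivAt_cube_sub_sub_cube {𝕜 : Type*} [NontriviallyNormedField 𝕜] (c t : 𝕜) :
    HasDerivAt (fun s => c ^ 3 - (c - s) ^ 3) (3 * (c - t) ^ 2) t :=
  (((hasDerivAt_id' t).const_sub c).fun_pow 3).const_sub (c ^ 3) |>.congr_deriv (by norm_num)

theorem aux_function_flux_jump_ne_zero_general {d n : ℕ}
    (Γ U : Set (EuclideanSpace ℝ (Fin d))) (hU : IsOpen U) (hΓU : Γ ⊆ U)
    (βm βp : ℝ) (hβm : 0 < βm)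
    (ψ' : Fin n → EuclideanSpace ℝ (Fin d) → ℝ)
    (hψ' : ∀ i, ContDiffOn ℝ 2 (ψ' i) U)
    (ψ : EuclideanSpace ℝ (Fin d) → ℝ) (hψ : ψ = fun x => ∏ i, ψ' i x)
    (c : ℝ) (hc : 0 < c)
    (x : EuclideanSpace ℝ (Fin d)) (hx : x ∈ Γ)
    (nv : EuclideanSpace ℝ (Fin d))
    (i : Fin n) (hzero : ψ' i x = 0) (hpos : ∀ j, j ≠ i → 0 < ψ' j x)
    (hnormal : fderiv ℝ (ψ' i) x nv ≠ 0) :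
    βp * (0 : ℝ)
        - βm * fderiv ℝ (fun z => c ^ 3 - (c - ψ z) ^ 3) x nv
      = -3 * βm * c ^ 2 * fderiv ℝ (ψ' i) x nv * ∏ j ∈ univ.erase i, ψ' j x ∧
    -3 * βm * c ^ 2 * fderiv ℝ (ψ' i) x nv * ∏ j ∈ univ.erase i, ψ' j x ≠ 0 := by
  have hdiff (k : Fin n) : HasFDerivAt (ψ' k) (fderiv ℝ (ψ' k) x) x :=
    ((hψ' k).contDiffAt (hU.mem_nhds (hΓU hx))).differentiableAt (by norm_num) |>.hasFDerivAt
  have hψx : ψ x = 0 := by rw [hψ]; exact prod_eq_zero (mem_univ i) hzero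
  have hψ_deriv : HasFDerivAt ψ ((∏ j ∈ univ.erase i, ψ' j x) • fderiv ℝ (ψ' i) x) x := by
    rw [hψ]; exact .finsetProd_of_eq_zero (fun k _ => hdiff k) (mem_univ i) hzero
  have hφ_deriv : HasFDerivAt (fun z => c ^ 3 - (c - ψ z) ^ 3) _ x :=
    (hasDerivAt_cube_sub_sub_cube c (ψ x)).comp_hasFDerivAt x hψ_deriv
  have hprod_pos : 0 < ∏ j ∈ univ.erase i, ψ' j x :=
    prod_pos fun j hj => hpos j (mem_erase.mp hj).1
  refine ⟨?_, by simp [hβm.ne', hc.ne', hnormal, hprod_pos.ne']⟩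
  rw [hφ_deriv.fderiv, hψx]
  simp only [smul_apply, smul_eq_mul]
  ring

/-- At a point `x ∈ Γ` lying on exactly one manifold `Mᵢ` (so `ψᵢ(x) = 0`,
`ψⱼ(x) > 0` for `j ≠ i`) with `∂ₙψᵢ(x) ≠ 0`, the flux jump of the auxiliary
function `φ` of Theorem 3.2 equals `−3β⁻c²(∂ₙψᵢ)(x) ∏_{j≠i} ψⱼ(x) ≠ 0`. -/
theorem aux_function_flux_jump_ne_zero {d n : ℕ}
    (Γ U : Set (EuclideanSpace ℝ (Fin d))) (hU : IsOpen U) (hΓU : Γ ⊆ U)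
    (βm βp : ℝ) (hβm : 0 < βm) (hβp : 0 < βp)
    (ψ' : Fin n → EuclideanSpace ℝ (Fin d) → ℝ)
    (hψ' : ∀ i, ContDiffOn ℝ 2 (ψ' i) U)
    (ψ : EuclideanSpace ℝ (Fin d) → ℝ) (hψ : ψ = fun x => ∏ i, ψ' i x)
    (c : ℝ) (hc : 0 < c)
    (x : EuclideanSpace ℝ (Fin d)) (hx : x ∈ Γ)
    (nv : EuclideanSpace ℝ (Fin d))
    (i : Fin n) (hzero : ψ' i x = 0) (hpos : ∀ j, j ≠ i → 0 < ψ' j x)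
    (hnormal : fderiv ℝ (ψ' i) x nv ≠ 0) :
    βp * (0 : ℝ)
        - βm * fderiv ℝ (fun z => c ^ 3 - (c - ψ z) ^ 3) x nv
      = -3 * βm * c ^ 2 * fderiv ℝ (ψ' i) x nv * ∏ j ∈ univ.erase i, ψ' j x ∧
    -3 * βm * c ^ 2 * fderiv ℝ (ψ' i) x nv * ∏ j ∈ univ.erase i, ψ' j x ≠ 0 :=
  aux_function_flux_jump_ne_zero_general Γ U hU hΓU βm βp hβm ψ' hψ' ψ hψ c hc x hx nv i hzero hpos
    hnormal
end
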